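/- arXiv:1712.04581 — 8 statements merged into one kernel-verified Lean document; each statement's English description precedes it below -/
import Mathlib

section
/- Let f₀,…,f_{T-1} : ℝ^n → ℝ be convex differentiable functions with ‖∇f_t(x)‖ ≤ G for all x and t. Starting from x₀ with ‖x₀ - x*‖ ≤ D, and using the update x_{t+1} = x_t - η ∇f_t(x_t) with η = D/(G√T), the average regret satisfies (1/T) Σ_{t=0}^{T-1} (f_t(x_t) - f_t(x*)) ≤ ηG²/2 + D²/(2ηT) ≤ DG/√T. -/
open RealInnerProductSpace Finset

lemma grad_convex_ineq {n : ℕ} {f : EuclideanSpace ℝ (Fin n) → ℝ}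
    {g x : EuclideanSpace ℝ (Fin n)} (hconv : ConvexOn ℝ Set.univ f)
    (hg : HasGradientAt f g x) (y : EuclideanSpace ℝ (Fin n)) :
    f x + ⟪g, y - x⟫ ≤ f y := by
  set φ : ℝ → ℝ := f ∘ (AffineMap.lineMap x y) with hφ
  have hφconv : ConvexOn ℝ Set.univ φ := by
    have := hconv.comp_affineMap (AffineMap.lineMap x y)
    simpa using this
  have hline : HasDerivAt (fun s : ℝ => (AffineMap.lineMap x y : ℝ →ᵃ[ℝ] _) s) (y - x) 0 := by
    have h1 : HasDerivAt (fun s : ℝ => s • (y - x) + x) ((1 : ℝ) • (y - x)) 0 :=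
      ((hasDerivAt_id (0 : ℝ)).smul_const (y - x)).add_const x
    simp only [one_smul] at h1
    convert h1 using 2
    simp only [AffineMap.lineMap_apply, vsub_eq_sub, vadd_eq_add]
  have hd : HasDerivAt φ ⟪g, y - x⟫ 0 := by
    have hf : HasFDerivAt f (InnerProductSpace.toDual ℝ _ g)
        ((AffineMap.lineMap x y : ℝ →ᵃ[ℝ] _) (0 : ℝ)) := by
      simpa [AffineMap.lineMap_apply] using (hasGradientAt_iff_hasFDerivAt.mp hg)
    have := hf.comp_hasDerivAt (0 : ℝ) hline
    simpa [φ, Function.comp] using this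
  have hs := hφconv.le_slope_of_hasDerivAt (Set.mem_univ 0) (Set.mem_univ 1) zero_lt_one hd
  have hslope : slope φ 0 1 = f y - f x := by
    simp [slope, φ, AffineMap.lineMap_apply]
  rw [hslope] at hs
  linarith

/-- Basic online gradient descent: average regret bound for Lipschitz convex functions. -/
theorem online_gradient_descent_regret {n : ℕ} (T : ℕ) (hT : 0 < T)
    (f : ℕ → EuclideanSpace ℝ (Fin n) → ℝ)
    (f' : ℕ → EuclideanSpace ℝ (Fin n) → EuclideanSpace ℝ (Fin n))
    (hconv : ∀ t, ConvexOn ℝ Set.univ (f t))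
    (hdiff : ∀ t x, HasGradientAt (f t) (f' t x) x)
    (G D : ℝ) (hG : 0 < G) (hD : 0 < D)
    (hGbound : ∀ t x, ‖f' t x‖ ≤ G)
    (xstar : EuclideanSpace ℝ (Fin n)) (x : ℕ → EuclideanSpace ℝ (Fin n))
    (hx0 : ‖x 0 - xstar‖ ≤ D)
    (η : ℝ) (hη : η = D / (G * Real.sqrt T))
    (hupdate : ∀ t, x (t + 1) = x t - η • f' t (x t)) :
    (1 / T : ℝ) * ∑ t ∈ range T, (f t (x t) - f t xstar)
      ≤ η * G ^ 2 / 2 + D ^ 2 / (2 * η * T) ∧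
    η * G ^ 2 / 2 + D ^ 2 / (2 * η * T) ≤ D * G / Real.sqrt T := by
  have hTpos : (0 : ℝ) < T := by exact_mod_cast hT
  have hsq : (0 : ℝ) < Real.sqrt T := Real.sqrt_pos.mpr hTpos
  have hs2 : Real.sqrt T ^ 2 = T := Real.sq_sqrt hTpos.le
  have hηpos : 0 < η := by rw [hη]; positivity
  set a : ℕ → ℝ := fun t => ‖x t - xstar‖ ^ 2 with ha
  have step : ∀ t, f t (x t) - f t xstar ≤ (a t - a (t + 1)) / (2 * η) + η * G ^ 2 / 2 := by
    intro t
    set g := f' t (x t) with hg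
    set I : ℝ := ⟪g, x t - xstar⟫ with hI
    have hgrad := grad_convex_ineq (hconv t) (hdiff t (x t)) xstar
    have hcomm : ⟪g, xstar - x t⟫ = -I := by
      rw [hI, ← inner_neg_right]; congr 1; abel
    have hinner : f t (x t) - f t xstar ≤ I := by
      rw [hcomm] at hgrad; linarith
    have hexp : a (t + 1) = a t - 2 * η * I + η ^ 2 * ‖g‖ ^ 2 := by
      have hx' : x (t + 1) - xstar = (x t - xstar) - η • g := by
        rw [hupdate t]; abel
      simp only [ha, hx']
      rw [norm_sub_sq_real, real_inner_smul_right, norm_smul, mul_pow, Real.norm_eq_abs,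
        sq_abs, hI, real_inner_comm g (x t - xstar)]
      ring
    have hgb : ‖g‖ ^ 2 ≤ G ^ 2 := by
      nlinarith [hGbound t (x t), norm_nonneg g]
    have h2η : (0 : ℝ) < 2 * η := by linarith
    have hcomb : (a t - a (t + 1)) / (2 * η) + η * G ^ 2 / 2
        = (a t - a (t + 1) + η ^ 2 * G ^ 2) / (2 * η) := by
      field_simp
    have hIle : I ≤ (a t - a (t + 1)) / (2 * η) + η * G ^ 2 / 2 := by
      rw [hcomb, le_div_iff₀ h2η]
      nlinarith [hexp, hgb, sq_nonneg η]
    linarith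
  have hsum : ∑ t ∈ range T, (f t (x t) - f t xstar)
      ≤ D ^ 2 / (2 * η) + T * (η * G ^ 2 / 2) := by
    calc ∑ t ∈ range T, (f t (x t) - f t xstar)
        ≤ ∑ t ∈ range T, ((a t - a (t + 1)) / (2 * η) + η * G ^ 2 / 2) :=
          Finset.sum_le_sum fun t _ => step t
      _ = (a 0 - a T) / (2 * η) + T * (η * G ^ 2 / 2) := by
          rw [Finset.sum_add_distrib, ← Finset.sum_div, Finset.sum_range_sub' a]
          simp [mul_comm]
      _ ≤ D ^ 2 / (2 * η) + T * (η * G ^ 2 / 2) := by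
          have h1 : a 0 ≤ D ^ 2 := by
            simp only [ha]; nlinarith [norm_nonneg (x 0 - xstar)]
          have h2 : 0 ≤ a T := by simp only [ha]; positivity
          have : (a 0 - a T) / (2 * η) ≤ D ^ 2 / (2 * η) := by
            gcongr; linarith
          linarith
  constructor
  · have hmul : (1 / T : ℝ) * ∑ t ∈ range T, (f t (x t) - f t xstar)
        ≤ (1 / T : ℝ) * (D ^ 2 / (2 * η) + T * (η * G ^ 2 / 2)) :=
      mul_le_mul_of_nonneg_left hsum (by positivity)
    have heq : (1 / T : ℝ) * (D ^ 2 / (2 * η) + T * (η * G ^ 2 / 2))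
        = η * G ^ 2 / 2 + D ^ 2 / (2 * η * T) := by
      field_simp; ring
    linarith [heq ▸ hmul]
  · apply le_of_eq
    set s := Real.sqrt T with hsdef
    have hT' : (T : ℝ) = s ^ 2 := hs2.symm
    rw [hη, hT']
    field_simp
    ring
end

section
/- Let f : ℝ^n → ℝ be convex differentiable with ‖∇f(x)‖ ≤ G for all x, and ‖x₀ - x*‖ ≤ D where x* is a minimizer of f. With updates x_{t+1} = x_t - η∇f(x_t) and η = D/(G√T), the average iterate x̂ = (1/T)Σ_{t=0}^{T-1} x_t satisfies f(x̂) - f(x*) ≤ DG/√T. -/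
/-!
Convexity gives `f xₜ - f x⋆ ≤ ⟪∇f xₜ, xₜ - x⋆⟫`, and expanding `‖xₜ₊₁ - x⋆‖²` bounds this inner
product by `(‖xₜ - x⋆‖² - ‖xₜ₊₁ - x⋆‖²) / (2η) + η G² / 2`. Summing over `t < T` telescopes to
`D² / (2η) + T η G² / 2`, which the choice of `η` makes equal to `D G √T`; Jensen's inequality
passes from the average of the `f xₜ` to `f x̂`.
-/

open RealInnerProductSpace Finset

theorem ConvexOn.add_apply_sub_le_of_hasFDerivAt {E : Type*} [NormedAddCommGroup E]
    [NormedSpace ℝ E] {s : Set E} {f : E → ℝ} {f' : E →L[ℝ] ℝ} {x y : E} (hf : ConvexOn ℝ s f)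
    (hx : x ∈ s) (hy : y ∈ s) (hf' : HasFDerivAt f f' x) :
    f x + f' (y - x) ≤ f y := by
  let A : ℝ →ᵃ[ℝ] E := AffineMap.lineMap x y
  have hA : HasDerivAt A (y - x) 0 := AffineMap.hasDerivAt_lineMap
  have hline : HasDerivAt (f ∘ A) (f' (y - x)) 0 := by
    refine HasFDerivAt.comp_hasDerivAt (0 : ℝ) ?_ hA
    simpa [A] using hf'
  have hslope := (hf.comp_affineMap A).le_slope_of_hasDerivAt (x := 0) (y := 1)
    (by simpa [A] using hx) (by simpa [A] using hy) one_pos hline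
  simp only [slope_def_field, Function.comp_apply, AffineMap.lineMap_apply_one,
    AffineMap.lineMap_apply_zero, sub_zero, div_one, A] at hslope
  linarith

theorem norm_sub_smul_sub_sq {F : Type*} [NormedAddCommGroup F] [InnerProductSpace ℝ F]
    (x g z : F) (η : ℝ) :
    ‖x - η • g - z‖ ^ 2 = ‖x - z‖ ^ 2 - 2 * η * ⟪g, x - z⟫ + η ^ 2 * ‖g‖ ^ 2 := by
  rw [sub_right_comm, norm_sub_sq_real, real_inner_smul_right, real_inner_comm, norm_smul,
    mul_pow, Real.norm_eq_abs, sq_abs]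
  ring

theorem ConvexOn.sub_le_of_hasGradientAt_step {E : Type*} [NormedAddCommGroup E]
    [InnerProductSpace ℝ E] [CompleteSpace E] {s : Set E} {f : E → ℝ} {g x z : E} {η : ℝ}
    (hf : ConvexOn ℝ s f) (hx : x ∈ s) (hz : z ∈ s) (hg : HasGradientAt f g x) (hη : 0 < η) :
    f x - f z ≤ (‖x - z‖ ^ 2 - ‖x - η • g - z‖ ^ 2) / (2 * η) + η * ‖g‖ ^ 2 / 2 := by
  have hfirst := hf.add_apply_sub_le_of_hasFDerivAt hx hz hg.hasFDerivAt
  rw [InnerProductSpace.toDual_apply_apply, ← neg_sub, inner_neg_right] at hfirst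
  have hrhs : (‖x - z‖ ^ 2 - ‖x - η • g - z‖ ^ 2) / (2 * η) + η * ‖g‖ ^ 2 / 2 = ⟪g, x - z⟫ := by
    rw [norm_sub_smul_sub_sq]
    field_simp
    ring
  linarith

theorem ConvexOn.map_inv_card_smul_sum_le {E ι : Type*} [AddCommGroup E] [Module ℝ E]
    {s : Set E} {f : E → ℝ} (hf : ConvexOn ℝ s f) {t : Finset ι} (ht : t.Nonempty) {p : ι → E}
    (hp : ∀ i ∈ t, p i ∈ s) :
    f ((#t : ℝ)⁻¹ • ∑ i ∈ t, p i) ≤ (#t : ℝ)⁻¹ * ∑ i ∈ t, f (p i) := by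
  have hcard : (0 : ℝ) < #t := by exact_mod_cast ht.card_pos
  have := hf.map_sum_le (w := fun _ ↦ (#t : ℝ)⁻¹) (fun _ _ ↦ by positivity)
    (by rw [sum_const, nsmul_eq_mul, mul_inv_cancel₀ hcard.ne']) hp
  rwa [← smul_sum, ← smul_sum, smul_eq_mul] at this

section GradientDescent

variable {E : Type*} [NormedAddCommGroup E] [InnerProductSpace ℝ E] [CompleteSpace E]
  {f : E → ℝ} {f' : E → E} {x : ℕ → E} {G η : ℝ}

theorem gradientDescent_sum_sub_le (hf : ConvexOn ℝ Set.univ f)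
    (hf' : ∀ y, HasGradientAt f (f' y) y) (hG : ∀ y, ‖f' y‖ ≤ G) (hη : 0 < η)
    (hx : ∀ t, x (t + 1) = x t - η • f' (x t)) (z : E) (T : ℕ) :
    ∑ t ∈ range T, (f (x t) - f z) ≤ ‖x 0 - z‖ ^ 2 / (2 * η) + T * (η * G ^ 2 / 2) := by
  set R : ℕ → ℝ := fun t ↦ ‖x t - z‖ ^ 2
  have hstep : ∀ t, f (x t) - f z ≤ (R t - R (t + 1)) / (2 * η) + η * G ^ 2 / 2 := by
    intro t
    have hGsq : η * ‖f' (x t)‖ ^ 2 / 2 ≤ η * G ^ 2 / 2 := by gcongr; exact hG _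
    have := hf.sub_le_of_hasGradientAt_step (Set.mem_univ _) (Set.mem_univ z) (hf' (x t)) hη
    simp only [R, hx t]
    linarith
  calc ∑ t ∈ range T, (f (x t) - f z)
      ≤ ∑ t ∈ range T, ((R t - R (t + 1)) / (2 * η) + η * G ^ 2 / 2) := sum_le_sum fun t _ ↦ hstep t
    _ = (R 0 - R T) / (2 * η) + T * (η * G ^ 2 / 2) := by
      rw [sum_add_distrib, ← sum_div, sum_range_sub', sum_const, card_range, nsmul_eq_mul]
    _ ≤ R 0 / (2 * η) + T * (η * G ^ 2 / 2) := by
      gcongr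
      exact sub_le_self _ (sq_nonneg _)

end GradientDescent

theorem gradient_descent_average_iterate_general {n : ℕ} (T : ℕ) (hT : 0 < T)
    (f : EuclideanSpace ℝ (Fin n) → ℝ)
    (f' : EuclideanSpace ℝ (Fin n) → EuclideanSpace ℝ (Fin n))
    (hconv : ConvexOn ℝ Set.univ f)
    (hdiff : ∀ x, HasGradientAt f (f' x) x)
    (G D : ℝ) (hG : 0 < G) (hD : 0 < D)
    (hGbound : ∀ x, ‖f' x‖ ≤ G)
    (xstar : EuclideanSpace ℝ (Fin n))
    (x : ℕ → EuclideanSpace ℝ (Fin n)) (hx0 : ‖x 0 - xstar‖ ≤ D)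
    (η : ℝ) (hη : η = D / (G * Real.sqrt T))
    (hupdate : ∀ t, x (t + 1) = x t - η • f' (x t)) :
    f ((1 / T : ℝ) • ∑ t ∈ range T, x t) - f xstar ≤ D * G / Real.sqrt T := by
  have hTpos : (0 : ℝ) < T := by exact_mod_cast hT
  have hsqrt : Real.sqrt T ^ 2 = T := Real.sq_sqrt hTpos.le
  have hηpos : 0 < η := by rw [hη]; positivity
  have hjensen := hconv.map_inv_card_smul_sum_le (nonempty_range_iff.2 hT.ne')
    fun t _ ↦ Set.mem_univ (x t)
  rw [card_range, ← one_div] at hjensen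
  calc f ((1 / T : ℝ) • ∑ t ∈ range T, x t) - f xstar
      ≤ 1 / T * ∑ t ∈ range T, f (x t) - f xstar := by linarith
    _ = 1 / T * ∑ t ∈ range T, (f (x t) - f xstar) := by
      rw [sum_sub_distrib, sum_const, card_range, nsmul_eq_mul]
      field_simp
    _ ≤ 1 / T * (‖x 0 - xstar‖ ^ 2 / (2 * η) + T * (η * G ^ 2 / 2)) := by
      gcongr
      exact gradientDescent_sum_sub_le hconv hdiff hGbound hηpos hupdate xstar T
    _ ≤ 1 / T * (D ^ 2 / (2 * η) + T * (η * G ^ 2 / 2)) := by gcongr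
    _ = D * G / Real.sqrt T := by
      rw [hη]
      field_simp
      linarith

/-- Offline gradient descent: convergence of the average iterate for Lipschitz convex `f`. -/
theorem gradient_descent_average_iterate {n : ℕ} (T : ℕ) (hT : 0 < T)
    (f : EuclideanSpace ℝ (Fin n) → ℝ)
    (f' : EuclideanSpace ℝ (Fin n) → EuclideanSpace ℝ (Fin n))
    (hconv : ConvexOn ℝ Set.univ f)
    (hdiff : ∀ x, HasGradientAt f (f' x) x)
    (G D : ℝ) (hG : 0 < G) (hD : 0 < D)
    (hGbound : ∀ x, ‖f' x‖ ≤ G)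
    (xstar : EuclideanSpace ℝ (Fin n)) (hmin : ∀ y, f xstar ≤ f y)
    (x : ℕ → EuclideanSpace ℝ (Fin n)) (hx0 : ‖x 0 - xstar‖ ≤ D)
    (η : ℝ) (hη : η = D / (G * Real.sqrt T))
    (hupdate : ∀ t, x (t + 1) = x t - η • f' (x t)) :
    f ((1 / T : ℝ) • ∑ t ∈ range T, x t) - f xstar ≤ D * G / Real.sqrt T :=
  gradient_descent_average_iterate_general T hT f f' hconv hdiff G D hG hD hGbound xstar x hx0 η hη
    hupdate
end

section
/- Let f : ℝ^n → ℝ be convex and β-smooth with minimizer x*. Then the iterates of gradient descent x_{t+1} = x_t - (1/β)∇f(x_t) satisfy f(x_T) - f(x*) ≤ β‖x₀ - x*‖²/(2T). Moreover, the potential Φ_t = t(f(x_t) - f(x*)) + (β/2)‖x_t - x*‖² is non-increasing in t. -/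
open RealInnerProductSpace

lemma convex_grad_ineq {n : ℕ} (f : EuclideanSpace ℝ (Fin n) → ℝ)
    (hconv : ConvexOn ℝ Set.univ f) {g x : EuclideanSpace ℝ (Fin n)}
    (hg : HasGradientAt f g x) (y : EuclideanSpace ℝ (Fin n)) :
    f x + ⟪g, y - x⟫ ≤ f y := by
  have hF := hg.hasFDerivAt
  have hline : ∀ s : ℝ, HasDerivAt (fun s : ℝ => x + s • (y - x)) (y - x) s := by
    intro s
    simpa using ((hasDerivAt_id s).smul_const (y - x)).const_add x
  have hφ : HasDerivAt (fun s : ℝ => f (x + s • (y - x))) ⟪g, y - x⟫ 0 := by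
    have hF' : HasFDerivAt f ((InnerProductSpace.toDual ℝ (EuclideanSpace ℝ (Fin n))) g) (x + (0:ℝ) • (y - x)) := by simpa using hF
    have := hF'.comp_hasDerivAt 0 (hline 0)
    simpa [InnerProductSpace.toDual_apply_apply, Function.comp_def] using this
  have key : ⟪g, y - x⟫ ≤ f y - f x := by
    have htend : Filter.Tendsto (fun s : ℝ => (f (x + s • (y - x)) - f x) / s)
        (nhdsWithin 0 (Set.Ioi 0)) (nhds ⟪g, y - x⟫) := by
      have := hasDerivAt_iff_tendsto_slope.1 hφ
      have h2 := this.mono_left (nhdsWithin_mono 0 (by intro s hs; exact ne_of_gt hs : Set.Ioi (0:ℝ) ⊆ {(0:ℝ)}ᶜ))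
      refine h2.congr' ?_
      filter_upwards [self_mem_nhdsWithin] with s hs
      simp [slope_def_field, sub_zero, div_eq_inv_mul]
    refine le_of_tendsto htend ?_
    filter_upwards [self_mem_nhdsWithin, Ioc_mem_nhdsGT_of_mem (by simp : (0:ℝ) ∈ Set.Ico 0 1)] with s hs hs1
    have h01 : 0 ≤ 1 - s := by linarith [hs1.2]
    have hc := hconv.2 (Set.mem_univ x) (Set.mem_univ y) h01 (le_of_lt hs) (by ring)
    have : f (x + s • (y - x)) ≤ (1 - s) * f x + s * f y := by
      have : (1 - s) • x + s • y = x + s • (y - x) := by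
        simp [smul_sub, sub_smul]; abel
      simpa [this] using hc
    rw [div_le_iff₀ hs]
    nlinarith [hs]
  linarith

/-- Gradient descent on a β-smooth convex function: `O(1/T)` convergence via the
combined potential `Φ_t = t (f(x_t) - f(x*)) + (β/2)‖x_t - x*‖²` (Take III). -/
theorem smooth_gd_convergence_takeIII {n : ℕ} (T : ℕ) (hT : 0 < T)
    (f : EuclideanSpace ℝ (Fin n) → ℝ)
    (f' : EuclideanSpace ℝ (Fin n) → EuclideanSpace ℝ (Fin n))
    (hconv : ConvexOn ℝ Set.univ f)
    (hdiff : ∀ x, HasGradientAt f (f' x) x)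
    (β : ℝ) (hβ : 0 < β)
    (hsmooth : ∀ x y, f y ≤ f x + ⟪f' x, y - x⟫ + β / 2 * ‖y - x‖ ^ 2)
    (xstar : EuclideanSpace ℝ (Fin n)) (hmin : ∀ y, f xstar ≤ f y)
    (x : ℕ → EuclideanSpace ℝ (Fin n))
    (hupdate : ∀ t, x (t + 1) = x t - (1 / β) • f' (x t)) :
    (∀ t : ℕ,
      ((t + 1 : ℝ) * (f (x (t + 1)) - f xstar) + β / 2 * ‖x (t + 1) - xstar‖ ^ 2)
        ≤ ((t : ℝ) * (f (x t) - f xstar) + β / 2 * ‖x t - xstar‖ ^ 2)) ∧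
    f (x T) - f xstar ≤ β * ‖x 0 - xstar‖ ^ 2 / (2 * T) := by
  have hstep : ∀ t : ℕ,
      ((t + 1 : ℝ) * (f (x (t + 1)) - f xstar) + β / 2 * ‖x (t + 1) - xstar‖ ^ 2)
        ≤ ((t : ℝ) * (f (x t) - f xstar) + β / 2 * ‖x t - xstar‖ ^ 2) := by
    intro t
    set g := f' (x t) with hg
    -- descent lemma
    have hdesc : f (x (t + 1)) ≤ f (x t) - 1 / (2 * β) * ‖g‖ ^ 2 := by
      have := hsmooth (x t) (x (t + 1))
      rw [hupdate t] at this ⊢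
      have hsub : x t - (1 / β) • g - x t = -((1 / β) • g) := by abel
      rw [hsub] at this
      have h1 : ⟪g, -((1 / β) • g)⟫ = -(1 / β) * ‖g‖ ^ 2 := by
        rw [inner_neg_right, real_inner_smul_right, real_inner_self_eq_norm_sq]; ring
      have h2 : ‖-((1 / β) • g)‖ ^ 2 = (1 / β) ^ 2 * ‖g‖ ^ 2 := by
        rw [norm_neg, norm_smul]
        simp [abs_of_pos (by positivity : (0:ℝ) < 1 / β), mul_pow]
      rw [h1, h2] at this
      have hβ' : β ≠ 0 := ne_of_gt hβ
      calc f (x t - (1 / β) • g) ≤ f (x t) + -(1 / β) * ‖g‖ ^ 2 + β / 2 * ((1 / β) ^ 2 * ‖g‖ ^ 2) := this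
        _ = f (x t) - 1 / (2 * β) * ‖g‖ ^ 2 := by field_simp; ring
    -- convexity
    have hcvx : f (x t) - f xstar ≤ ⟪g, x t - xstar⟫ := by
      have := convex_grad_ineq f hconv (hdiff (x t)) xstar
      have h : ⟪g, xstar - x t⟫ = -⟪g, x t - xstar⟫ := by
        rw [← inner_neg_right]; congr 1; abel
      rw [h] at this; linarith
    -- norm expansion
    have hnorm : ‖x (t + 1) - xstar‖ ^ 2
        = ‖x t - xstar‖ ^ 2 - 2 * (1 / β) * ⟪g, x t - xstar⟫ + (1 / β) ^ 2 * ‖g‖ ^ 2 := by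
      rw [hupdate t]
      have h : x t - (1 / β) • g - xstar = (x t - xstar) - (1 / β) • g := by abel
      rw [h, norm_sub_sq_real, real_inner_smul_right, norm_smul, real_inner_comm]
      simp [abs_of_pos (by positivity : (0:ℝ) < 1 / β), mul_pow]
      ring
    have hfs : f xstar ≤ f (x (t + 1)) := hmin _
    have ht0 : (0:ℝ) ≤ t := Nat.cast_nonneg t
    have hβ' : β ≠ 0 := ne_of_gt hβ
    have hexp : β / 2 * ‖x (t + 1) - xstar‖ ^ 2
        = β / 2 * ‖x t - xstar‖ ^ 2 - ⟪g, x t - xstar⟫ + 1 / (2 * β) * ‖g‖ ^ 2 := by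
      rw [hnorm]; field_simp
    have hu0 : 0 ≤ 1 / (2 * β) := by positivity
    generalize hu : 1 / (2 * β) = u at hdesc hexp hu0
    have h1 := mul_le_mul_of_nonneg_left hdesc (by positivity : (0:ℝ) ≤ (t:ℝ) + 1)
    have h2 : 0 ≤ (t:ℝ) * (u * ‖g‖ ^ 2) :=
      mul_nonneg ht0 (mul_nonneg hu0 (sq_nonneg ‖g‖))
    nlinarith [h1, h2, hcvx, hexp]
  refine ⟨hstep, ?_⟩
  have hΦ : ∀ t : ℕ, (t : ℝ) * (f (x t) - f xstar) + β / 2 * ‖x t - xstar‖ ^ 2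
      ≤ β / 2 * ‖x 0 - xstar‖ ^ 2 := by
    intro t
    induction t with
    | zero => simp
    | succ k ih => exact le_trans (by exact_mod_cast hstep k) ih
  have hTf := hΦ T
  have hT' : (0:ℝ) < T := by exact_mod_cast hT
  rw [le_div_iff₀ (by linarith : (0:ℝ) < 2 * (T:ℝ))]
  nlinarith [sq_nonneg ‖x T - xstar‖, hβ, hTf, hT']
end

section
/- Let K ⊆ ℝ^n be a closed convex set and f convex and β-smooth. Let x_{t+1} = Π_K(x_t - (1/β)∇f(x_t)). Then for any y ∈ K, f(x_{t+1}) - f(y) ≤ β⟨x_t - x_{t+1}, x_t - y⟩ - (β/2)‖x_t - x_{t+1}‖². -/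
/-!
Smoothness bounds `f x_{t+1}` above by the linearization of `f` at `x_t` plus
`(β/2)‖x_t - x_{t+1}‖²`, and convexity bounds `f y` below by the same linearization. What remains
is the gradient term `⟪∇f(x_t), x_{t+1} - y⟫`, which the obtuse-angle characterization of the
projection, `⟪x_t - ∇f(x_t)/β - x_{t+1}, y - x_{t+1}⟫ ≤ 0`, bounds by
`β⟪x_t - x_{t+1}, x_{t+1} - y⟫`.
-/

open RealInnerProductSpace

theorem ConvexOn.add_le_of_hasFDerivAt {E : Type*} [NormedAddCommGroup E] [NormedSpace ℝ E]
    {s : Set E} {f : E → ℝ} {f' : E →L[ℝ] ℝ} {x y : E} (hf : ConvexOn ℝ s f) (hx : x ∈ s)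
    (hy : y ∈ s) (hfx : HasFDerivAt f f' x) : f x + f' (y - x) ≤ f y := by
  let line : ℝ →ᵃ[ℝ] E := AffineMap.lineMap x y
  have hderiv : HasDerivAt (f ∘ line) (f' (y - x)) 0 := by
    have : line 0 = x := AffineMap.lineMap_apply_zero x y
    exact (this ▸ hfx).comp_hasDerivAt 0 AffineMap.hasDerivAt_lineMap
  have hslope := (hf.comp_affineMap line).le_slope_of_hasDerivAt
    (by simpa [line] using hx) (by simpa [line] using hy) zero_lt_one hderiv
  simp only [slope_def_field, Function.comp_apply, line, AffineMap.lineMap_apply_zero,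
    AffineMap.lineMap_apply_one, sub_zero, div_one] at hslope
  linarith

theorem ConvexOn.add_inner_le_of_hasGradientAt {E : Type*} [NormedAddCommGroup E]
    [InnerProductSpace ℝ E] [CompleteSpace E] {s : Set E} {f : E → ℝ} {g x y : E}
    (hf : ConvexOn ℝ s f) (hx : x ∈ s) (hy : y ∈ s) (hfx : HasGradientAt f g x) :
    f x + ⟪g, y - x⟫ ≤ f y := by
  simpa using hf.add_le_of_hasFDerivAt hx hy hfx.hasFDerivAt

theorem inner_sub_nonpos_of_forall_norm_sub_le {F : Type*} [NormedAddCommGroup F]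
    [InnerProductSpace ℝ F] {K : Set F} (hK : Convex ℝ K) {u v : F} (hv : v ∈ K)
    (hmin : ∀ w ∈ K, ‖v - u‖ ≤ ‖w - u‖) {w : F} (hw : w ∈ K) : ⟪u - v, w - v⟫ ≤ 0 := by
  have : Nonempty K := ⟨⟨v, hv⟩⟩
  refine (norm_eq_iInf_iff_real_inner_le_zero hK hv).mp (le_antisymm ?_ ?_) w hw
  · exact le_ciInf fun w => by simpa only [norm_sub_rev u] using hmin w w.2
  · exact ciInf_le ⟨0, Set.forall_mem_range.2 fun w : K => norm_nonneg (u - w)⟩ ⟨v, hv⟩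

theorem projected_smooth_step_claim_general {n : ℕ} (K : Set (EuclideanSpace ℝ (Fin n)))
    (hKconv : Convex ℝ K)
    (f : EuclideanSpace ℝ (Fin n) → ℝ)
    (f' : EuclideanSpace ℝ (Fin n) → EuclideanSpace ℝ (Fin n))
    (hconv : ConvexOn ℝ Set.univ f)
    (hdiff : ∀ x, HasGradientAt f (f' x) x)
    (β : ℝ) (hβ : 0 < β)
    (hsmooth : ∀ x y, f y ≤ f x + ⟪f' x, y - x⟫ + β / 2 * ‖y - x‖ ^ 2)
    (xt xnext : EuclideanSpace ℝ (Fin n)) (hxnextK : xnext ∈ K)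
    (hproj : ∀ p ∈ K, ‖xnext - (xt - (1 / β) • f' xt)‖ ≤ ‖p - (xt - (1 / β) • f' xt)‖)
    (y : EuclideanSpace ℝ (Fin n)) (hy : y ∈ K) :
    f xnext - f y ≤ β * ⟪xt - xnext, xt - y⟫ - β / 2 * ‖xt - xnext‖ ^ 2 := by
  set g := f' xt
  have hdescent := hsmooth xt xnext
  have hsupport : f xt + ⟪g, y - xt⟫ ≤ f y :=
    hconv.add_inner_le_of_hasGradientAt (Set.mem_univ _) (Set.mem_univ _) (hdiff xt)
  have hoptimality : ⟪β • (xt - xnext) - g, y - xnext⟫ ≤ 0 := by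
    have h := inner_sub_nonpos_of_forall_norm_sub_le hKconv hxnextK hproj hy
    rw [show xt - (1 / β) • g - xnext = (1 / β) • (β • (xt - xnext) - g) by
      rw [smul_sub, smul_smul, one_div, inv_mul_cancel₀ hβ.ne', one_smul]; abel,
      real_inner_smul_left] at h
    exact nonpos_of_mul_nonpos_right h (by positivity)
  set a := xt - xnext with ha
  set b := xt - y with hb
  rw [show xnext - xt = -a by rw [ha]; abel, norm_neg] at hdescent
  rw [show y - xt = -b by rw [hb]; abel] at hsupport
  rw [show y - xnext = a - b by rw [ha, hb]; abel] at hoptimality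
  simp only [inner_neg_right, inner_sub_left, inner_sub_right, real_inner_smul_left,
    real_inner_self_eq_norm_sq] at hdescent hsupport hoptimality
  linarith

/-- Key claim for projected smooth gradient descent: one projected gradient step
satisfies `f(x_{t+1}) - f(y) ≤ β⟨x_t - x_{t+1}, x_t - y⟩ - (β/2)‖x_t - x_{t+1}‖²`. -/
theorem projected_smooth_step_claim {n : ℕ} (K : Set (EuclideanSpace ℝ (Fin n)))
    (hKclosed : IsClosed K) (hKconv : Convex ℝ K)
    (f : EuclideanSpace ℝ (Fin n) → ℝ)
    (f' : EuclideanSpace ℝ (Fin n) → EuclideanSpace ℝ (Fin n))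
    (hconv : ConvexOn ℝ Set.univ f)
    (hdiff : ∀ x, HasGradientAt f (f' x) x)
    (β : ℝ) (hβ : 0 < β)
    (hsmooth : ∀ x y, f y ≤ f x + ⟪f' x, y - x⟫ + β / 2 * ‖y - x‖ ^ 2)
    (xt xnext : EuclideanSpace ℝ (Fin n)) (hxnextK : xnext ∈ K)
    (hproj : ∀ p ∈ K, ‖xnext - (xt - (1 / β) • f' xt)‖ ≤ ‖p - (xt - (1 / β) • f' xt)‖)
    (y : EuclideanSpace ℝ (Fin n)) (hy : y ∈ K) :
    f xnext - f y ≤ β * ⟪xt - xnext, xt - y⟫ - β / 2 * ‖xt - xnext‖ ^ 2 :=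
  projected_smooth_step_claim_general K hKconv f f' hconv hdiff β hβ hsmooth xt xnext hxnextK hproj
    y hy
end

section
/- Let f be α-strongly convex and β-smooth with κ = β/α and minimizer x*. Then gradient descent x_{t+1} = x_t - (1/β)∇f(x_t) satisfies f(x_T) - f(x*) ≤ (1 - 1/κ)^T (f(x₀) - f(x*)) ≤ e^{-T/κ}(f(x₀) - f(x*)). -/
/-!
Under β-smoothness, the step `x - (1/β) ∇f(x)` decreases `f` by at least `‖∇f(x)‖² / (2β)`;
under α-strong convexity, minimizing the lower quadratic model gives the Polyak–Łojasiewicz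
inequality `2α (f(x) - f(x*)) ≤ ‖∇f(x)‖²`. Together they contract the optimality gap by the factor
`1 - α/β` at every step, and `1 - α/β ≤ exp (-α/β)`.
-/

open RealInnerProductSpace

section GradientDescent

variable {E : Type*} [NormedAddCommGroup E] [InnerProductSpace ℝ E] {f : E → ℝ} {f' : E → E}
  {α β : ℝ}

theorem le_of_quadratic_bounds [Nontrivial E]
    (hsc : ∀ x y, f x + ⟪f' x, y - x⟫ + α / 2 * ‖y - x‖ ^ 2 ≤ f y)
    (hsmooth : ∀ x y, f y ≤ f x + ⟪f' x, y - x⟫ + β / 2 * ‖y - x‖ ^ 2) : α ≤ β := by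
  obtain ⟨y, hy⟩ := exists_ne (0 : E)
  have hpos : 0 < ‖y - 0‖ ^ 2 := by rw [sub_zero]; positivity
  nlinarith [hsc 0 y, hsmooth 0 y]

theorem smooth_gradient_step_le (hβ : 0 < β)
    (hsmooth : ∀ x y, f y ≤ f x + ⟪f' x, y - x⟫ + β / 2 * ‖y - x‖ ^ 2) (x : E) :
    f (x - (1 / β) • f' x) ≤ f x - ‖f' x‖ ^ 2 / (2 * β) := by
  have hstep : x - (1 / β) • f' x - x = -((1 / β) • f' x) := by abel
  have hinner : ⟪f' x, x - (1 / β) • f' x - x⟫ = -(1 / β) * ‖f' x‖ ^ 2 := by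
    rw [hstep, inner_neg_right, real_inner_smul_right, real_inner_self_eq_norm_sq]
    ring
  have hnorm : ‖x - (1 / β) • f' x - x‖ ^ 2 = (1 / β) ^ 2 * ‖f' x‖ ^ 2 := by
    rw [hstep, norm_neg, norm_smul, mul_pow, Real.norm_of_nonneg (by positivity)]
  calc f (x - (1 / β) • f' x)
      ≤ f x + -(1 / β) * ‖f' x‖ ^ 2 + β / 2 * ((1 / β) ^ 2 * ‖f' x‖ ^ 2) := by
        simpa only [hinner, hnorm] using hsmooth x (x - (1 / β) • f' x)
    _ = f x - ‖f' x‖ ^ 2 / (2 * β) := by field_simp; ring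

theorem strongConvex_polyak_lojasiewicz (hα : 0 < α)
    (hsc : ∀ x y, f x + ⟪f' x, y - x⟫ + α / 2 * ‖y - x‖ ^ 2 ≤ f y) (x y : E) :
    2 * α * (f x - f y) ≤ ‖f' x‖ ^ 2 := by
  have hsq : ‖α • (y - x) + f' x‖ ^ 2
      = α ^ 2 * ‖y - x‖ ^ 2 + 2 * (α * ⟪f' x, y - x⟫) + ‖f' x‖ ^ 2 := by
    rw [norm_add_sq_real, real_inner_smul_left, real_inner_comm, norm_smul, mul_pow,
      Real.norm_of_nonneg hα.le]
  have hlower := mul_le_mul_of_nonneg_left (hsc x y) hα.le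
  nlinarith [sq_nonneg ‖α • (y - x) + f' x‖]

theorem gradient_step_sub_le (hα : 0 < α) (hβ : 0 < β)
    (hsc : ∀ x y, f x + ⟪f' x, y - x⟫ + α / 2 * ‖y - x‖ ^ 2 ≤ f y)
    (hsmooth : ∀ x y, f y ≤ f x + ⟪f' x, y - x⟫ + β / 2 * ‖y - x‖ ^ 2) (x y : E) :
    f (x - (1 / β) • f' x) - f y ≤ (1 - α / β) * (f x - f y) := by
  have hpl : α / β * (f x - f y) ≤ ‖f' x‖ ^ 2 / (2 * β) := by
    rw [le_div_iff₀ (by positivity)]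
    calc α / β * (f x - f y) * (2 * β) = 2 * α * (f x - f y) := by field_simp
      _ ≤ ‖f' x‖ ^ 2 := strongConvex_polyak_lojasiewicz hα hsc x y
  linarith [smooth_gradient_step_le hβ hsmooth x]

theorem gradientDescent_sub_le_pow (hα : 0 < α) (hβ : 0 < β) (hαβ : α ≤ β)
    (hsc : ∀ x y, f x + ⟪f' x, y - x⟫ + α / 2 * ‖y - x‖ ^ 2 ≤ f y)
    (hsmooth : ∀ x y, f y ≤ f x + ⟪f' x, y - x⟫ + β / 2 * ‖y - x‖ ^ 2)
    {x : ℕ → E} (hupdate : ∀ t, x (t + 1) = x t - (1 / β) • f' (x t)) (y : E) (t : ℕ) :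
    f (x t) - f y ≤ (1 - α / β) ^ t * (f (x 0) - f y) := by
  have hrate : 0 ≤ 1 - α / β := sub_nonneg.2 ((div_le_one hβ).2 hαβ)
  induction t with
  | zero => simp
  | succ t ih =>
    calc f (x (t + 1)) - f y ≤ (1 - α / β) * (f (x t) - f y) := by
          rw [hupdate]; exact gradient_step_sub_le hα hβ hsc hsmooth (x t) y
      _ ≤ (1 - α / β) * ((1 - α / β) ^ t * (f (x 0) - f y)) :=
          mul_le_mul_of_nonneg_left ih hrate
      _ = (1 - α / β) ^ (t + 1) * (f (x 0) - f y) := by ring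

end GradientDescent

theorem one_sub_pow_le_exp_neg_mul {a : ℝ} (ha : a ≤ 1) (n : ℕ) :
    (1 - a) ^ n ≤ Real.exp (-n * a) := by
  calc (1 - a) ^ n ≤ Real.exp (-a) ^ n :=
        pow_le_pow_left₀ (sub_nonneg.2 ha) (by linarith [Real.add_one_le_exp (-a)]) n
    _ = Real.exp (-n * a) := by rw [← Real.exp_nat_mul]; ring_nf

theorem gd_well_conditioned_convergence_general {n : ℕ} (T : ℕ)
    (f : EuclideanSpace ℝ (Fin n) → ℝ)
    (f' : EuclideanSpace ℝ (Fin n) → EuclideanSpace ℝ (Fin n))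
    (α β : ℝ) (hα : 0 < α) (hβ : 0 < β)
    (hsc : ∀ x y, f y ≥ f x + ⟪f' x, y - x⟫ + α / 2 * ‖y - x‖ ^ 2)
    (hsmooth : ∀ x y, f y ≤ f x + ⟪f' x, y - x⟫ + β / 2 * ‖y - x‖ ^ 2)
    (κ : ℝ) (hκ : κ = β / α)
    (xstar : EuclideanSpace ℝ (Fin n)) (hmin : ∀ y, f xstar ≤ f y)
    (x : ℕ → EuclideanSpace ℝ (Fin n))
    (hupdate : ∀ t, x (t + 1) = x t - (1 / β) • f' (x t)) :
    f (x T) - f xstar ≤ (1 - 1 / κ) ^ T * (f (x 0) - f xstar) ∧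
    (1 - 1 / κ) ^ T * (f (x 0) - f xstar)
      ≤ Real.exp (-(T : ℝ) / κ) * (f (x 0) - f xstar) := by
  rcases subsingleton_or_nontrivial (EuclideanSpace ℝ (Fin n)) with _ | _
  · simp [Subsingleton.elim (x T) xstar, Subsingleton.elim (x 0) xstar]
  have hαβ : α ≤ β := le_of_quadratic_bounds hsc hsmooth
  have hκ_inv : 1 / κ = α / β := by rw [hκ, one_div_div]
  rw [div_eq_mul_one_div (-(T : ℝ)), hκ_inv]
  exact ⟨gradientDescent_sub_le_pow hα hβ hαβ hsc hsmooth hupdate xstar T,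
    mul_le_mul_of_nonneg_right (one_sub_pow_le_exp_neg_mul ((div_le_one hβ).2 hαβ) T)
      (sub_nonneg.2 (hmin _))⟩

/-- Gradient descent on a well-conditioned function: linear convergence. -/
theorem gd_well_conditioned_convergence {n : ℕ} (T : ℕ)
    (f : EuclideanSpace ℝ (Fin n) → ℝ)
    (f' : EuclideanSpace ℝ (Fin n) → EuclideanSpace ℝ (Fin n))
    (hdiff : ∀ x, HasGradientAt f (f' x) x)
    (α β : ℝ) (hα : 0 < α) (hβ : 0 < β)
    (hsc : ∀ x y, f y ≥ f x + ⟪f' x, y - x⟫ + α / 2 * ‖y - x‖ ^ 2)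
    (hsmooth : ∀ x y, f y ≤ f x + ⟪f' x, y - x⟫ + β / 2 * ‖y - x‖ ^ 2)
    (κ : ℝ) (hκ : κ = β / α)
    (xstar : EuclideanSpace ℝ (Fin n)) (hmin : ∀ y, f xstar ≤ f y)
    (x : ℕ → EuclideanSpace ℝ (Fin n))
    (hupdate : ∀ t, x (t + 1) = x t - (1 / β) • f' (x t)) :
    f (x T) - f xstar ≤ (1 - 1 / κ) ^ T * (f (x 0) - f xstar) ∧
    (1 - 1 / κ) ^ T * (f (x 0) - f xstar)
      ≤ Real.exp (-(T : ℝ) / κ) * (f (x 0) - f xstar) :=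
  gd_well_conditioned_convergence_general T f f' α β hα hβ hsc hsmooth κ hκ xstar hmin x hupdate
end

section
/- Let h : ℝ^n → ℝ be strictly convex and differentiable, K ⊆ ℝ^n convex, and D_h(y‖x) = h(y) - h(x) - ⟨∇h(x), y-x⟩ the Bregman divergence. If b = argmin_{x∈K} D_h(x‖b') is the Bregman projection of b' onto K and a ∈ K, then ⟨∇h(b') - ∇h(b), a - b⟩ ≤ 0, and consequently D_h(a‖b') ≥ D_h(a‖b) + D_h(b‖b'), hence D_h(a‖b) ≤ D_h(a‖b'). -/
/-!
The gradient of `x ↦ D_h(x‖b')` at `b` is `∇h(b) - ∇h(b')`, so the first-order optimality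
condition for its minimum over the convex set `K` at `b` reads `⟪∇h(b) - ∇h(b'), a - b⟫ ≥ 0`.
The three-point identity `D_h(a‖b') = D_h(a‖b) + D_h(b‖b') - ⟪∇h(b') - ∇h(b), a - b⟫` turns
this into the Pythagorean inequality, and `D_h(b‖b') ≥ 0` (the gradient inequality of a convex function) gives the last claim.
-/

open RealInnerProductSpace InnerProductSpace

section FirstOrder

variable {E : Type*} [NormedAddCommGroup E] [NormedSpace ℝ E] {s : Set E} {f : E → ℝ}
  {f' : E →L[ℝ] ℝ} {x y : E}

theorem ConvexOn.apply_sub_le_sub_of_hasFDerivAt (hf : ConvexOn ℝ s f) (hx : x ∈ s)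
    (hy : y ∈ s) (hd : HasFDerivAt f f' x) : f' (y - x) ≤ f y - f x := by
  let L : ℝ →ᵃ[ℝ] E := AffineMap.lineMap x y
  have hline : ConvexOn ℝ (L ⁻¹' s) (f ∘ L) := hf.comp_affineMap L
  have hderiv : HasDerivAt (f ∘ L) (f' (y - x)) 0 := by
    refine HasFDerivAt.comp_hasDerivAt (0 : ℝ) ?_ AffineMap.hasDerivAt_lineMap
    simpa [L] using hd
  simpa [slope_def_field, L] using
    hline.le_slope_of_hasDerivAt (x := 0) (y := 1) (by simpa [L] using hx) (by simpa [L] using hy)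
      one_pos hderiv

theorem IsMinOn.hasFDerivWithinAt_sub_nonneg (hmin : IsMinOn f s x) (hs : Convex ℝ s)
    (hx : x ∈ s) (hy : y ∈ s) (hd : HasFDerivWithinAt f f' s x) : 0 ≤ f' (y - x) :=
  hmin.localize.hasFDerivWithinAt_nonneg hd
    (sub_mem_posTangentConeAt_of_segment_subset (hs.segment_subset hx hy))

end FirstOrder

section Bregman

variable {E : Type*} [NormedAddCommGroup E] [InnerProductSpace ℝ E] (h : E → ℝ) (h' : E → E)

def bregmanDiv (y x : E) : ℝ := h y - h x - ⟪h' x, y - x⟫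

variable {h h'}

theorem bregmanDiv_nonneg [CompleteSpace E] (hconv : ConvexOn ℝ Set.univ h) {x : E}
    (hx : HasGradientAt h (h' x) x) (y : E) : 0 ≤ bregmanDiv h h' y x := by
  have hgrad := hconv.apply_sub_le_sub_of_hasFDerivAt (Set.mem_univ x) (Set.mem_univ y)
    hx.hasFDerivAt
  rw [toDual_apply_apply] at hgrad
  unfold bregmanDiv
  linarith

theorem bregmanDiv_three_point (a b c : E) :
    bregmanDiv h h' a c = bregmanDiv h h' a b + bregmanDiv h h' b c - ⟪h' c - h' b, a - b⟫ := by
  simp only [bregmanDiv, inner_sub_left, inner_sub_right]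
  ring

theorem hasGradientAt_bregmanDiv_left [CompleteSpace E] {y : E} (hy : HasGradientAt h (h' y) y)
    (x : E) : HasGradientAt (fun z ↦ bregmanDiv h h' z x) (h' y - h' x) y := by
  rw [hasGradientAt_iff_hasFDerivAt, map_sub]
  exact (hy.hasFDerivAt.sub_const (h x)).sub
    ((hasFDerivAt_comp_sub x).2 (toDual ℝ E (h' x)).hasFDerivAt)

theorem inner_sub_gradient_nonpos_of_isMinOn_bregmanDiv [CompleteSpace E] {K : Set E}
    (hK : Convex ℝ K) {a b b' : E} (ha : a ∈ K) (hb : b ∈ K)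
    (hproj : IsMinOn (fun x ↦ bregmanDiv h h' x b') K b) (hdiff : HasGradientAt h (h' b) b) :
    ⟪h' b' - h' b, a - b⟫ ≤ 0 := by
  have hopt := hproj.hasFDerivWithinAt_sub_nonneg hK hb ha
    (hasGradientAt_bregmanDiv_left hdiff b').hasFDerivAt.hasFDerivWithinAt
  rw [toDual_apply_apply, ← neg_sub, inner_neg_left] at hopt
  linarith

end Bregman

/-- Generalized Pythagorean property of Bregman projections. -/
theorem bregman_projection_pythagorean {n : ℕ}
    (h : EuclideanSpace ℝ (Fin n) → ℝ)
    (h' : EuclideanSpace ℝ (Fin n) → EuclideanSpace ℝ (Fin n))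
    (hstrict : StrictConvexOn ℝ Set.univ h)
    (hdiff : ∀ x, HasGradientAt h (h' x) x)
    (K : Set (EuclideanSpace ℝ (Fin n))) (hKconv : Convex ℝ K)
    (Dh : EuclideanSpace ℝ (Fin n) → EuclideanSpace ℝ (Fin n) → ℝ)
    (hDh : ∀ y x, Dh y x = h y - h x - ⟪h' x, y - x⟫)
    (a b b' : EuclideanSpace ℝ (Fin n)) (ha : a ∈ K) (hb : b ∈ K)
    (hproj : ∀ x ∈ K, Dh b b' ≤ Dh x b') :
    ⟪h' b' - h' b, a - b⟫ ≤ 0 ∧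
    Dh a b' ≥ Dh a b + Dh b b' ∧
    Dh a b ≤ Dh a b' := by
  obtain rfl : Dh = bregmanDiv h h' := funext fun y ↦ funext (hDh y)
  have hvar := inner_sub_gradient_nonpos_of_isMinOn_bregmanDiv hKconv ha hb hproj (hdiff b)
  have hpyth := bregmanDiv_three_point (h := h) (h' := h') a b b'
  have hnonneg := bregmanDiv_nonneg hstrict.convexOn (hdiff b') b
  exact ⟨hvar, by linarith, by linarith⟩
end

section
/- Let f : ℝ^n → ℝ be convex and β-smooth with minimizer x*. Define x₀ = y₀ = z₀ and for t ≥ 0: y_{t+1} = x_t - (1/β)∇f(x_t), z_{t+1} = z_t - ((t+1)/(2β))∇f(x_t), x_{t+1} = (1 - τ_{t+1})y_{t+1} + τ_{t+1}z_{t+1} with τ_t = 2/(t+2). Then the potential Φ_t = t(t+1)(f(y_t) - f(x*)) + 2β‖z_t - x*‖² is non-increasing, and consequently f(y_t) - f(x*) ≤ 2β‖z₀ - x*‖²/(t(t+1)) for all t ≥ 1. -/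
open RealInnerProductSpace

lemma first_order_convex {n : ℕ} (f : EuclideanSpace ℝ (Fin n) → ℝ)
    (hconv : ConvexOn ℝ Set.univ f) {x g : EuclideanSpace ℝ (Fin n)}
    (hg : HasGradientAt f g x) (p : EuclideanSpace ℝ (Fin n)) :
    f x + ⟪g, p - x⟫ ≤ f p := by
  set φ : ℝ → ℝ := f ∘ (AffineMap.lineMap x p) with hφ
  have hφconv : ConvexOn ℝ Set.univ φ := by
    have := hconv.comp_affineMap (AffineMap.lineMap x p : ℝ →ᵃ[ℝ] EuclideanSpace ℝ (Fin n))
    simpa [hφ] using this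
  have hpath : HasDerivAt (fun t : ℝ => (AffineMap.lineMap x p : ℝ →ᵃ[ℝ] _) t) (p - x) 0 := by
    have ha : HasDerivAt (fun t : ℝ => (1 - t) • x) ((-1 : ℝ) • x) 0 :=
      (((hasDerivAt_id (0:ℝ)).const_sub 1)).smul_const x
    have hb : HasDerivAt (fun t : ℝ => t • p) ((1 : ℝ) • p) 0 :=
      (hasDerivAt_id (0:ℝ)).smul_const p
    have h1 := ha.add hb
    have he : (-1 : ℝ) • x + (1 : ℝ) • p = p - x := by module
    rw [he] at h1
    simp [AffineMap.lineMap_apply_module]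
    exact h1
  have hd : HasDerivAt φ ⟪g, p - x⟫ 0 := by
    have h2 := hg.hasFDerivAt
    have h3 : HasFDerivAt f (InnerProductSpace.toDual ℝ _ g)
        ((AffineMap.lineMap x p : ℝ →ᵃ[ℝ] _) 0) := by simpa using h2
    have := h3.comp_hasDerivAt 0 hpath
    simpa [hφ, InnerProductSpace.toDual_apply_apply] using this
  have hslope := hφconv.le_slope_of_hasDerivAt (Set.mem_univ (0:ℝ)) (Set.mem_univ (1:ℝ))
    one_pos hd
  have hs : slope φ 0 1 = f p - f x := by
    simp [slope, hφ]
  rw [hs] at hslope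
  linarith

/-- Nesterov's accelerated gradient method (linear-coupling form) for a β-smooth
convex function: the potential `Φ_t = t(t+1)(f(y_t) - f(x*)) + 2β‖z_t - x*‖²` is
non-increasing, and `f(y_t) - f(x*) ≤ 2β‖z₀ - x*‖²/(t(t+1))`. -/
theorem nesterov_accelerated_gd {n : ℕ}
    (f : EuclideanSpace ℝ (Fin n) → ℝ)
    (f' : EuclideanSpace ℝ (Fin n) → EuclideanSpace ℝ (Fin n))
    (hconv : ConvexOn ℝ Set.univ f)
    (hdiff : ∀ x, HasGradientAt f (f' x) x)
    (β : ℝ) (hβ : 0 < β)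
    (hsmooth : ∀ x y, f y ≤ f x + ⟪f' x, y - x⟫ + β / 2 * ‖y - x‖ ^ 2)
    (xstar : EuclideanSpace ℝ (Fin n)) (hmin : ∀ p, f xstar ≤ f p)
    (X Y Z : ℕ → EuclideanSpace ℝ (Fin n))
    (hinit : X 0 = Y 0 ∧ Y 0 = Z 0)
    (hy : ∀ t, Y (t + 1) = X t - (1 / β) • f' (X t))
    (hz : ∀ t, Z (t + 1) = Z t - ((t + 1) / (2 * β)) • f' (X t))
    (hx : ∀ t, X (t + 1)
      = (1 - 2 / ((t + 1 : ℝ) + 2)) • Y (t + 1) + (2 / ((t + 1 : ℝ) + 2)) • Z (t + 1)) :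
    (∀ t : ℕ,
      ((t + 1 : ℝ) * (t + 2) * (f (Y (t + 1)) - f xstar) + 2 * β * ‖Z (t + 1) - xstar‖ ^ 2)
        ≤ ((t : ℝ) * (t + 1) * (f (Y t) - f xstar) + 2 * β * ‖Z t - xstar‖ ^ 2)) ∧
    ∀ t : ℕ, 1 ≤ t →
      f (Y t) - f xstar ≤ 2 * β * ‖Z 0 - xstar‖ ^ 2 / (t * (t + 1)) := by
  obtain ⟨hxy0, hyz0⟩ := hinit
  have hfo : ∀ x p, f x + ⟪f' x, p - x⟫ ≤ f p :=
    fun x p => first_order_convex f hconv (hdiff x) p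
  -- the combination identity for X
  have hcomb : ∀ t : ℕ, ((t : ℝ) + 2) • X t = (t : ℝ) • Y t + (2 : ℝ) • Z t := by
    intro t
    cases t with
    | zero => simp [hxy0, hyz0]
    | succ s =>
      have h := hx s
      have hne : ((s : ℝ) + 1 + 2) ≠ 0 := by positivity
      have c1 : ((s : ℝ) + 1 + 2) * (1 - 2 / ((s : ℝ) + 1 + 2)) = (s : ℝ) + 1 := by
        field_simp
        ring
      have c2 : ((s : ℝ) + 1 + 2) * (2 / ((s : ℝ) + 1 + 2)) = 2 := by
        field_simp
      push_cast
      rw [h, smul_add, smul_smul, smul_smul, c1, c2]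
  -- the potential decrease step
  have step : ∀ t : ℕ,
      ((t + 1 : ℝ) * (t + 2) * (f (Y (t + 1)) - f xstar) + 2 * β * ‖Z (t + 1) - xstar‖ ^ 2)
        ≤ ((t : ℝ) * (t + 1) * (f (Y t) - f xstar) + 2 * β * ‖Z t - xstar‖ ^ 2) := by
    intro t
    set gt := f' (X t) with hgt
    set A := f (X t) with hA
    set B := f (Y (t + 1)) with hB
    set C := f (Y t) with hC
    set F := f xstar with hF
    set I1 := ⟪gt, X t - Y t⟫ with hI1
    set I2 := ⟪gt, X t - xstar⟫ with hI2
    set I3 := ⟪gt, Z t - xstar⟫ with hI3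
    set D := ‖gt‖ ^ 2 / (2 * β) with hD
    have hDnn : 0 ≤ D := by positivity
    -- gradient descent step
    have h1 : B ≤ A - D := by
      have hs := hsmooth (X t) (X t - (1 / β) • f' (X t))
      rw [sub_sub_cancel_left, inner_neg_right, real_inner_smul_right,
        real_inner_self_eq_norm_sq, norm_neg, norm_smul, Real.norm_eq_abs,
        abs_of_pos (by positivity : (0:ℝ) < 1 / β), mul_pow] at hs
      rw [hB, hy t, hA, hD, hgt]
      have key : f (X t) + -(1 / β * ‖f' (X t)‖ ^ 2)
          + β / 2 * ((1 / β) ^ 2 * ‖f' (X t)‖ ^ 2)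
          = f (X t) - ‖f' (X t)‖ ^ 2 / (2 * β) := by
        field_simp; ring
      linarith
    -- first order at X t against Y t and xstar
    have h2 : A - C ≤ I1 := by
      have h := hfo (X t) (Y t)
      have e : I1 = -⟪gt, Y t - X t⟫ := by rw [hI1, ← inner_neg_right, neg_sub]
      rw [e]; rw [← hA, ← hC, ← hgt] at h; linarith
    have h3 : A - F ≤ I2 := by
      have h := hfo (X t) xstar
      have e : I2 = -⟪gt, xstar - X t⟫ := by rw [hI2, ← inner_neg_right, neg_sub]
      rw [e]; rw [← hA, ← hF, ← hgt] at h; linarith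
    -- mirror step identity
    have h4 : 2 * β * ‖Z (t + 1) - xstar‖ ^ 2
        = 2 * β * ‖Z t - xstar‖ ^ 2 - 2 * ((t : ℝ) + 1) * I3 + ((t : ℝ) + 1) ^ 2 * D := by
      rw [hz t]
      have e : Z t - (((t : ℝ) + 1) / (2 * β)) • gt - xstar
          = (Z t - xstar) - (((t : ℝ) + 1) / (2 * β)) • gt := by abel
      rw [e, norm_sub_sq_real, real_inner_smul_right, norm_smul, Real.norm_eq_abs,
        abs_of_pos (by positivity : (0:ℝ) < ((t : ℝ) + 1) / (2 * β)), mul_pow, hD, hI3,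
        real_inner_comm (Z t - xstar) gt]
      field_simp
    -- combination identity in inner products
    have hv : (t : ℝ) • (X t - Y t) + (2 : ℝ) • (X t - Z t) = 0 := by
      have h := hcomb t
      linear_combination (norm := module) h
    have h5 : (t : ℝ) * I1 + 2 * I2 - 2 * I3 = 0 := by
      have e : (t : ℝ) * I1 + 2 * I2 - 2 * I3
          = ⟪gt, (t : ℝ) • (X t - Y t) + (2 : ℝ) • (X t - Z t)⟫ := by
        rw [hI1, hI2, hI3]
        simp only [inner_add_right, inner_sub_right, real_inner_smul_right]
        ring
      rw [e, hv, inner_zero_right]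
    have h5t : (t : ℝ) * ((t : ℝ) * I1 + 2 * I2 - 2 * I3) = 0 :=
      mul_eq_zero_of_right _ h5
    have ht0 : (0 : ℝ) ≤ (t : ℝ) := Nat.cast_nonneg t
    have m1 : ((t : ℝ) + 1) * ((t : ℝ) + 2) * B ≤ ((t : ℝ) + 1) * ((t : ℝ) + 2) * (A - D) :=
      mul_le_mul_of_nonneg_left h1 (by positivity)
    have m2 : (t : ℝ) * ((t : ℝ) + 1) * (A - C) ≤ (t : ℝ) * ((t : ℝ) + 1) * I1 :=
      mul_le_mul_of_nonneg_left h2 (by positivity)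
    have m3 : 2 * ((t : ℝ) + 1) * (A - F) ≤ 2 * ((t : ℝ) + 1) * I2 :=
      mul_le_mul_of_nonneg_left h3 (by positivity)
    have m6 : 0 ≤ (t : ℝ) * D := mul_nonneg ht0 hDnn
    linarith [m1, m2, m3, h4, h5, h5t, m6, hDnn]
  refine ⟨step, ?_⟩
  -- potential is bounded by its initial value
  have mono : ∀ t : ℕ,
      (t : ℝ) * ((t : ℝ) + 1) * (f (Y t) - f xstar) + 2 * β * ‖Z t - xstar‖ ^ 2
        ≤ 2 * β * ‖Z 0 - xstar‖ ^ 2 := by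
    intro t
    induction t with
    | zero => simp
    | succ s ih =>
      have h := step s
      push_cast
      calc ((s : ℝ) + 1) * ((s : ℝ) + 1 + 1) * (f (Y (s + 1)) - f xstar)
            + 2 * β * ‖Z (s + 1) - xstar‖ ^ 2
          ≤ (s : ℝ) * ((s : ℝ) + 1) * (f (Y s) - f xstar) + 2 * β * ‖Z s - xstar‖ ^ 2 := by
            have : ((s : ℝ) + 1 + 1) = ((s : ℝ) + 2) := by ring
            rw [this]; exact h
        _ ≤ 2 * β * ‖Z 0 - xstar‖ ^ 2 := ih
  intro t ht
  have ht' : (0 : ℝ) < (t : ℝ) := by exact_mod_cast ht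
  have hpos : (0 : ℝ) < (t : ℝ) * ((t : ℝ) + 1) := by positivity
  rw [le_div_iff₀ hpos]
  have h0 := mono t
  have hnn : 0 ≤ 2 * β * ‖Z t - xstar‖ ^ 2 := by positivity
  nlinarith [h0, hnn]
end

section
/- Let f be α-strongly convex and β-smooth on ℝ^n with κ = β/α > 1 and minimizer x*. Define γ = 1/(√κ - 1), τ = 1/(√κ + 1), iterates y_{t+1} = x_t - (1/β)∇f(x_t), x_{t+1} = (1 + (√κ-1)/(√κ+1)) y_{t+1} - ((√κ-1)/(√κ+1)) y_t starting from x₀ = y₀, and z_t = (1/τ)x_t - ((1-τ)/τ)y_t. Then the potential Φ(t) = (1+γ)^t (f(y_t) - f(x*) + (α/2)‖z_t - x*‖²) is non-increasing, and consequently f(y_t) - f(x*) ≤ (1+γ)^{-t} · ((α+β)/2)‖x₀ - x*‖². -/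
open RealInnerProductSpace

private lemma expand_sq {n : ℕ} (a b g : EuclideanSpace ℝ (Fin n)) (p q r : ℝ) :
    ‖p•a + q•b + r•g‖^2 = p^2*‖a‖^2 + q^2*‖b‖^2 + r^2*‖g‖^2
      + 2*(p*q)*⟪a,b⟫ + 2*(p*r)*⟪a,g⟫ + 2*(q*r)*⟪b,g⟫ := by
  simp only [← real_inner_self_eq_norm_sq, inner_add_left, inner_add_right,
    real_inner_smul_left, real_inner_smul_right, real_inner_comm b a,
    real_inner_comm g a, real_inner_comm g b]
  ring

set_option maxHeartbeats 2000000 in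
/-- Nesterov's accelerated method for α-strongly convex, β-smooth functions with
condition number `κ = β/α > 1`: the potential
`Φ(t) = (1+γ)^t (f(y_t) - f(x*) + (α/2)‖z_t - x*‖²)` is non-increasing, yielding the
accelerated linear rate. -/
theorem nesterov_accelerated_strongly_convex {n : ℕ}
    (f : EuclideanSpace ℝ (Fin n) → ℝ)
    (f' : EuclideanSpace ℝ (Fin n) → EuclideanSpace ℝ (Fin n))
    (hdiff : ∀ x, HasGradientAt f (f' x) x)
    (α β : ℝ) (hα : 0 < α) (hβ : 0 < β)
    (hsc : ∀ x y, f y ≥ f x + ⟪f' x, y - x⟫ + α / 2 * ‖y - x‖ ^ 2)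
    (hsmooth : ∀ x y, f y ≤ f x + ⟪f' x, y - x⟫ + β / 2 * ‖y - x‖ ^ 2)
    (κ : ℝ) (hκ : κ = β / α) (hκ1 : 1 < κ)
    (γ τ : ℝ) (hγ : γ = 1 / (Real.sqrt κ - 1)) (hτ : τ = 1 / (Real.sqrt κ + 1))
    (xstar : EuclideanSpace ℝ (Fin n)) (hmin : ∀ p, f xstar ≤ f p)
    (x y z : ℕ → EuclideanSpace ℝ (Fin n))
    (hinit : x 0 = y 0)
    (hy : ∀ t, y (t + 1) = x t - (1 / β) • f' (x t))
    (hx : ∀ t, x (t + 1)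
      = (1 + (Real.sqrt κ - 1) / (Real.sqrt κ + 1)) • y (t + 1)
        - ((Real.sqrt κ - 1) / (Real.sqrt κ + 1)) • y t)
    (hz : ∀ t, z t = (1 / τ) • x t - ((1 - τ) / τ) • y t) :
    (∀ t : ℕ,
      (1 + γ) ^ (t + 1) * (f (y (t + 1)) - f xstar + α / 2 * ‖z (t + 1) - xstar‖ ^ 2)
        ≤ (1 + γ) ^ t * (f (y t) - f xstar + α / 2 * ‖z t - xstar‖ ^ 2)) ∧
    ∀ t : ℕ, f (y t) - f xstar
      ≤ (1 + γ) ^ (-(t : ℝ)) * ((α + β) / 2 * ‖x 0 - xstar‖ ^ 2) := by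
  have hκ0 : (0:ℝ) < κ := lt_trans one_pos hκ1
  have hs1 : 1 < Real.sqrt κ := by
    rw [show (1:ℝ) = Real.sqrt 1 from Real.sqrt_one.symm]
    exact Real.sqrt_lt_sqrt (by norm_num) hκ1
  set s := Real.sqrt κ with hsdef
  have hs0 : 0 < s := lt_trans one_pos hs1
  have hsne : s ≠ 0 := ne_of_gt hs0
  have hsm1 : (0:ℝ) < s - 1 := by linarith
  have hsm1ne : s - 1 ≠ 0 := ne_of_gt hsm1
  have hsp1ne : s + 1 ≠ 0 := ne_of_gt (by linarith)
  have hαne : α ≠ 0 := ne_of_gt hα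
  have hβne : β ≠ 0 := ne_of_gt hβ
  have hsq : s ^ 2 = κ := Real.sq_sqrt hκ0.le
  have hβα : β = α * s ^ 2 := by rw [hsq, hκ]; field_simp
  have hγpos : 0 < γ := by rw [hγ]; exact div_pos one_pos hsm1
  have h1γ : 1 + γ = s / (s - 1) := by rw [hγ]; field_simp; ring
  have h1γpos : (0:ℝ) < 1 + γ := by linarith
  have hτ1 : 1 / τ = s + 1 := by rw [hτ]; field_simp
  have hτ2 : (1 - τ) / τ = s := by rw [hτ]; field_simp; ring
  -- descent lemma
  have hdesc : ∀ p : EuclideanSpace ℝ (Fin n),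
      f (p - (1 / β) • f' p) ≤ f p - 1/2 * (1/β) * ‖f' p‖^2 := by
    intro p
    have h := hsmooth p (p - (1 / β) • f' p)
    rw [sub_sub_cancel_left, inner_neg_right, real_inner_smul_right,
      real_inner_self_eq_norm_sq, norm_neg, norm_smul, Real.norm_eq_abs,
      abs_of_pos (by positivity : (0:ℝ) < 1/β)] at h
    have he : f p + -(1 / β * ‖f' p‖ ^ 2) + β / 2 * (1 / β * ‖f' p‖) ^ 2
        = f p - 1/2 * (1/β) * ‖f' p‖^2 := by field_simp; ring
    linarith [he ▸ h]
  -- gradient at minimizer is zero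
  have hgstar : f' xstar = 0 := by
    have h1 := hdesc xstar
    have h2 := hmin (xstar - (1 / β) • f' xstar)
    have h3 : ‖f' xstar‖^2 ≤ 0 := by
      have hb : 0 < 1/2 * (1/β) := by positivity
      nlinarith
    have h4 : ‖f' xstar‖ = 0 := by nlinarith [sq_nonneg ‖f' xstar‖, norm_nonneg (f' xstar)]
    exact norm_eq_zero.mp h4
  -- key one-step inequality
  have step : ∀ t : ℕ,
      (1 + γ) * (f (y (t + 1)) - f xstar + α / 2 * ‖z (t + 1) - xstar‖ ^ 2)
        ≤ f (y t) - f xstar + α / 2 * ‖z t - xstar‖ ^ 2 := by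
    intro t
    set u := x t with hu
    set g := f' (x t) with hg
    set a := y t - u with ha
    set b := xstar - u with hb
    have hzt : z t - xstar = -(s • a + (1:ℝ) • b + (0:ℝ) • g) := by
      rw [hz t, hτ1, hτ2, ha, hb]
      module
    have hzt1 : z (t+1) - xstar = -((s-1) • a + (1:ℝ) • b + (s * (1/β)) • g) := by
      rw [hz (t+1), hτ1, hτ2, hx t, hy t, ha, hb, hg]
      match_scalars <;> (field_simp; try ring)
    have hA : f (y (t+1)) ≤ f u - 1/2 * (1/β) * ‖g‖^2 := by
      rw [hy t]; exact hdesc u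
    have hB : f u + ⟪a,g⟫ + α / 2 * ‖a‖ ^ 2 ≤ f (y t) := by
      have h := hsc u (y t)
      have e : ⟪a,g⟫ = ⟪f' u, y t - u⟫ := real_inner_comm _ _
      linarith [h, e]
    have hC : f u + ⟪b,g⟫ + α / 2 * ‖b‖ ^ 2 ≤ f xstar := by
      have h := hsc u xstar
      have e : ⟪b,g⟫ = ⟪f' u, xstar - u⟫ := real_inner_comm _ _
      linarith [h, e]
    have hN : ‖z t - xstar‖^2
        = s^2*‖a‖^2 + ‖b‖^2 + 2*s*⟪a,b⟫ := by
      rw [hzt, norm_neg, expand_sq]; ring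
    have hN1 : ‖z (t+1) - xstar‖^2
        = (s-1)^2*‖a‖^2 + ‖b‖^2 + (s*(1/β))^2*‖g‖^2
          + 2*(s-1)*⟪a,b⟫ + 2*((s-1)*(s*(1/β)))*⟪a,g⟫ + 2*(s*(1/β))*⟪b,g⟫ := by
      rw [hzt1, norm_neg, expand_sq]; ring
    rw [h1γ, div_mul_eq_mul_div, div_le_iff₀ hsm1]
    have hc : α * s^2 * (1/β) = 1 := by rw [hβα]; field_simp
    have ID : α*s/2 * ‖z (t+1) - xstar‖^2 - α*(s-1)/2 * ‖z t - xstar‖^2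
        = (s-1)*⟪a,g⟫ + ⟪b,g⟫ + s*(1/β)/2*‖g‖^2
          - α*s*(s-1)/2*‖a‖^2 + α/2*‖b‖^2 := by
      rw [hN, hN1]
      linear_combination ((s-1)*⟪a,g⟫ + ⟪b,g⟫ + s*(1/β)/2*‖g‖^2) * hc
    have P1 : s * f (y (t+1)) ≤ s * (f u - 1/2 * (1/β) * ‖g‖^2) :=
      mul_le_mul_of_nonneg_left hA hs0.le
    have P2 : (s-1) * (f u + ⟪a,g⟫ + α / 2 * ‖a‖ ^ 2) ≤ (s-1) * f (y t) :=
      mul_le_mul_of_nonneg_left hB hsm1.le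
    have slack1 : 0 ≤ α * (s-1) * ‖a‖^2 :=
      mul_nonneg (mul_nonneg hα.le hsm1.le) (sq_nonneg _)
    have slack2 : 0 ≤ α * s * (s-1) * ‖a‖^2 :=
      mul_nonneg (mul_nonneg (mul_nonneg hα.le hs0.le) hsm1.le) (sq_nonneg _)
    linarith [P1, P2, hC, ID, slack1, slack2]
  constructor
  · intro t
    have hpow : (0:ℝ) < (1+γ)^t := pow_pos h1γpos t
    calc (1 + γ) ^ (t + 1) * (f (y (t + 1)) - f xstar + α / 2 * ‖z (t + 1) - xstar‖ ^ 2)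
        = (1+γ)^t * ((1+γ) * (f (y (t + 1)) - f xstar + α / 2 * ‖z (t + 1) - xstar‖ ^ 2)) := by
          rw [pow_succ]; ring
      _ ≤ (1+γ)^t * (f (y t) - f xstar + α / 2 * ‖z t - xstar‖ ^ 2) :=
          mul_le_mul_of_nonneg_left (step t) hpow.le
  · intro t
    have mono : ∀ t : ℕ,
        (1 + γ)^t * (f (y t) - f xstar + α / 2 * ‖z t - xstar‖ ^ 2)
          ≤ f (y 0) - f xstar + α / 2 * ‖z 0 - xstar‖ ^ 2 := by
      intro t
      induction t with
      | zero => simp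
      | succ k ih =>
        have hpow : (0:ℝ) < (1+γ)^k := pow_pos h1γpos k
        calc (1 + γ)^(k+1) * (f (y (k+1)) - f xstar + α / 2 * ‖z (k+1) - xstar‖ ^ 2)
            = (1+γ)^k * ((1+γ) * (f (y (k+1)) - f xstar + α / 2 * ‖z (k+1) - xstar‖ ^ 2)) := by
              rw [pow_succ]; ring
          _ ≤ (1+γ)^k * (f (y k) - f xstar + α / 2 * ‖z k - xstar‖ ^ 2) :=
              mul_le_mul_of_nonneg_left (step k) hpow.le
          _ ≤ _ := ih
    have hz0 : z 0 = x 0 := by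
      rw [hz 0, hτ1, hτ2, ← hinit]
      module
    have hf0 : f (y 0) - f xstar ≤ β/2 * ‖x 0 - xstar‖^2 := by
      have h := hsmooth xstar (x 0)
      rw [hgstar, inner_zero_left] at h
      rw [← hinit]
      linarith
    have hΦ0 : f (y 0) - f xstar + α / 2 * ‖z 0 - xstar‖ ^ 2
        ≤ (α + β) / 2 * ‖x 0 - xstar‖ ^ 2 := by
      rw [hz0]; linarith
    have hpow : (0:ℝ) < (1+γ)^t := pow_pos h1γpos t
    have h1 : (1+γ)^t * (f (y t) - f xstar)
        ≤ (α + β) / 2 * ‖x 0 - xstar‖ ^ 2 := by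
      have hm := mono t
      have hnn : 0 ≤ (1+γ)^t * (α / 2 * ‖z t - xstar‖ ^ 2) :=
        mul_nonneg hpow.le (mul_nonneg (by linarith) (sq_nonneg _))
      nlinarith
    have hrp : (1 + γ) ^ (-(t : ℝ)) = ((1+γ)^t)⁻¹ := by
      rw [Real.rpow_neg h1γpos.le, Real.rpow_natCast]
    rw [hrp, inv_mul_eq_div, le_div_iff₀ hpow]
    nlinarith [h1]
end
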